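/- arXiv:1801.05139 — 7 statements merged into one kernel-verified Lean document; each statement's English description precedes it below -/
import Mathlib

section
/- Let G be a finite connected simple graph with exactly two vertices u ≠ v of degree 3 and every other vertex of degree 2. Then either (a) G is a theta graph: G is the union of three paths from u to v that are pairwise internally vertex-disjoint and pairwise edge-disjoint, and these paths contain all edges of G; or (b) G is a dumbbell graph: G is the union of two vertex-disjoint cycles, one passing through u and one passing through v, together with a path from u to v that meets the two cycles only in its endpoints u and v, and these contain all edges of G. -/
/-!
Every vertex other than `u` and `v` has degree `2`, so `G` is a subdivision of a cubic
multigraph on `{u, v}`. Each edge at `u` starts a branch that runs through degree-`2` vertices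
until it first returns to `{u, v}`, and two branches sharing an edge or an inner vertex consist
of the same edges, because a trail through a vertex of degree `2` uses both of its edges. The
three edges at `u` therefore either start three edge-disjoint branches to `v` (a theta graph), or
two of them lie on a loop at `u` and the third starts the only branch to `v`. If neither `u` nor
`v` sees three branches to the other, there are loops at both, and with the branch between them
they form a dumbbell. Connectedness makes the branches exhaust all edges.
-/

open Finset

namespace SimpleGraph

variable {V : Type*} {G : SimpleGraph V}

theorem Connected.edgeSet_subset_of_forall_adj (hconn : G.Connected) {B : Set V}
    {E : Set (Sym2 V)} (hB : B.Nonempty) (hEB : ∀ x ∈ B, ∀ y, G.Adj x y → s(x, y) ∈ E)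
    (hE : ∀ x ∉ B, ∀ y z, G.Adj x z → s(x, y) ∈ E → s(x, z) ∈ E) : G.edgeSet ⊆ E := by
  have step : ∀ x y, G.Adj x y → (∀ z, G.Adj x z → s(x, z) ∈ E) →
      ∀ z, G.Adj y z → s(y, z) ∈ E := by
    intro x y hxy hx z hyz
    by_cases hyB : y ∈ B
    · exact hEB y hyB z hyz
    · exact hE y hyB x z hyz (Sym2.eq_swap ▸ hx y hxy)
  have reach : ∀ {x y : V} (_ : G.Walk x y), (∀ z, G.Adj x z → s(x, z) ∈ E) →
      ∀ z, G.Adj y z → s(y, z) ∈ E := by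
    intro x y p
    induction p with
    | nil => exact id
    | cons h _ ih => exact fun hx => ih (step _ _ h hx)
  obtain ⟨b, hb⟩ := hB
  intro e he
  induction e using Sym2.inductionOn with
  | hf x y => exact reach (hconn.preconnected b x).some (hEB b hb) y he

namespace Walk

variable {s t x : V} {w : G.Walk s t}

theorem IsCycle.eq_snd_or_eq_penultimate_of_mem_edges {c : G.Walk s s} (hc : c.IsCycle)
    {y : V} (h : s(s, y) ∈ c.edges) : y = c.snd ∨ y = c.penultimate := by
  rw [← c.cons_tail_eq hc.not_nil, edges_cons, List.mem_cons] at h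
  rcases h with h | h
  · exact Or.inl (Sym2.congr_right.1 h)
  · refine Or.inr ((hc.isPath_tail.eq_penultimate_of_mem_edges h).trans ?_)
    conv_rhs => rw [← c.cons_tail_eq hc.not_nil]
    rw [penultimate_cons_of_not_nil]
    exact edges_eq_nil.not.mp (List.ne_nil_of_mem h)

/-- Viewing `G` as a subdivision of a multigraph on the vertex set `B`, a branch is one of the
subdivided edges traversed from end to end; a closed branch is a subdivided loop. -/
structure IsBranch (B : Set V) (w : G.Walk s t) : Prop where
  isTrail : w.IsTrail
  not_nil : ¬w.Nil
  tail_nodup : w.support.tail.Nodup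
  start_mem : s ∈ B
  end_mem : t ∈ B
  eq_end_of_mem : ∀ x ∈ w.support.tail, x ∈ B → x = t

theorem forall_mem_edges_of_mem_edges {B : Set V} {E : Set (Sym2 V)}
    (hE : ∀ x ∉ B, ∀ y z, G.Adj x z → s(x, y) ∈ E → s(x, z) ∈ E) :
    ∀ {s t : V} (w : G.Walk s t), w.support.tail.Nodup → (∀ x ∈ w.support.tail, x ∈ B → x = t) →
      ∀ e ∈ w.edges, e ∈ E → ∀ f ∈ w.edges, f ∈ E := by
  intro s t w
  induction w with
  | nil => simp
  | @cons s a t h q ih =>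
    intro hnd hB e he heE
    cases q with
    | nil =>
      simp only [edges_cons, edges_nil, List.mem_singleton] at he ⊢
      rintro f rfl
      exact he ▸ heE
    | @cons _ b _ h' r =>
      simp only [support_cons, List.tail_cons] at hnd hB ih
      have ha : a ∉ B := fun haB =>
        (List.nodup_cons.1 hnd).1 (hB a List.mem_cons_self haB ▸ r.end_mem_support)
      have hq := ih hnd.of_cons fun x hx => hB x (List.mem_cons_of_mem _ hx)
      have key : s(s, a) ∈ E ↔ s(a, b) ∈ E :=
        ⟨fun h₀ => hE a ha s b h' (Sym2.eq_swap ▸ h₀),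
          fun h₁ => Sym2.eq_swap ▸ hE a ha b s h.symm h₁⟩
      have hqE : ∀ f ∈ (cons h' r).edges, f ∈ E := by
        rw [edges_cons, List.mem_cons] at he
        rcases he with rfl | he
        · exact hq _ (by simp) (key.1 heE)
        · exact hq e he heE
      intro f hf
      rw [edges_cons, List.mem_cons] at hf
      rcases hf with rfl | hf
      · exact key.2 (hqE _ (by simp))
      · exact hqE f hf

namespace IsBranch

variable {B : Set V}

theorem isPath (hw : w.IsBranch B) (hst : s ≠ t) : w.IsPath := by
  apply IsPath.mk'
  rw [← cons_tail_support, List.nodup_cons]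
  exact ⟨fun hs => hst (hw.eq_end_of_mem s hs hw.start_mem), hw.tail_nodup⟩

theorem isCycle {c : G.Walk s s} (hc : c.IsBranch B) : c.IsCycle :=
  (isCycle_def c).2 ⟨hc.isTrail, fun h => hc.not_nil (h ▸ Nil.nil), hc.tail_nodup⟩

theorem eq_or_eq_of_mem_support (hw : w.IsBranch B) (hx : x ∈ w.support) (hxB : x ∈ B) :
    x = s ∨ x = t := by
  rw [← cons_tail_support, List.mem_cons] at hx
  exact hx.imp_right fun hx => hw.eq_end_of_mem x hx hxB

end IsBranch

section Count

variable [DecidableEq V]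

theorem IsTrail.countP_mem_edges_eq_card (hw : w.IsTrail) (x : V) :
    w.edges.countP (x ∈ ·) = #{e ∈ hw.edgesFinset | x ∈ e} := by
  rw [← Multiset.coe_countP, Multiset.countP_eq_card_filter]
  rfl

variable [Fintype V] [DecidableRel G.Adj]

theorem IsTrail.filter_mem_subset_incidenceFinset (hw : w.IsTrail) (x : V) :
    {e ∈ hw.edgesFinset | x ∈ e} ⊆ G.incidenceFinset x := fun e he => by
  rw [mem_filter] at he
  exact (G.mem_incidenceFinset x e).2 ⟨w.edges_subset_edgeSet he.1, he.2⟩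

theorem IsTrail.countP_mem_edges_le_degree (hw : w.IsTrail) (x : V) :
    w.edges.countP (x ∈ ·) ≤ G.degree x := by
  rw [hw.countP_mem_edges_eq_card, ← card_incidenceFinset_eq_degree]
  exact card_le_card (hw.filter_mem_subset_incidenceFinset x)

theorem IsTrail.countP_mem_edges_eq_degree_iff (hw : w.IsTrail) (x : V) :
    w.edges.countP (x ∈ ·) = G.degree x ↔ ∀ y, G.Adj x y → s(x, y) ∈ w.edges := by
  rw [hw.countP_mem_edges_eq_card, ← card_incidenceFinset_eq_degree]
  constructor
  · intro h y hxy
    have hy : s(x, y) ∈ G.incidenceFinset x := by simpa [mk'_mem_incidenceSet_left_iff]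
    rw [← eq_of_subset_of_card_le (hw.filter_mem_subset_incidenceFinset x) h.ge,
      mem_filter] at hy
    exact hy.1
  · intro h
    congr 1
    refine Subset.antisymm (hw.filter_mem_subset_incidenceFinset x) fun e he => ?_
    induction e using Sym2.inductionOn with
    | hf a b =>
    rw [mem_incidenceFinset, mk'_mem_incidenceSet_iff] at he
    obtain ⟨hab, rfl | rfl⟩ := he
    · exact mem_filter.2 ⟨h b hab, Sym2.mem_mk_left _ _⟩
    · exact mem_filter.2 ⟨Sym2.eq_swap ▸ h a hab.symm, Sym2.mem_mk_right _ _⟩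

end Count

section Degree

variable [Fintype V] [DecidableRel G.Adj]

/-- A trail passes through an inner vertex along an even, positive number of its edges;
at a vertex of degree at most `2` it must therefore use all of them. -/
theorem IsTrail.mem_edges_of_degree_le_two (hw : w.IsTrail) (hx : x ∈ w.support)
    (hxs : x ≠ s) (hxt : x ≠ t) (hdeg : G.degree x ≤ 2) {y : V} (hxy : G.Adj x y) :
    s(x, y) ∈ w.edges := by
  classical
  have heven := (hw.even_countP_edges_iff x).2 fun _ => ⟨hxs, hxt⟩
  obtain ⟨e, he, hxe⟩ := (mem_support_iff_exists_mem_edges.1 hx).resolve_left hxt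
  have hpos : 0 < w.edges.countP (x ∈ ·) := List.countP_pos_iff.2 ⟨e, he, by simpa using hxe⟩
  have hle := hw.countP_mem_edges_le_degree x
  exact (hw.countP_mem_edges_eq_degree_iff x).1 (by grind) y hxy

theorem IsTrail.exists_adj_not_mem_edges (hw : w.IsTrail) (hst : s ≠ t)
    (hdeg : Even (G.degree t)) : ∃ y, G.Adj t y ∧ s(t, y) ∉ w.edges := by
  classical
  by_contra! h
  have := (hw.even_countP_edges_iff t).1 ((hw.countP_mem_edges_eq_degree_iff t).2 h ▸ hdeg)
  exact (this hst).2 rfl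

namespace IsBranch

variable {B : Set V}

theorem mem_edges_of_adj (hdeg : ∀ x ∉ B, G.degree x ≤ 2) (hw : w.IsBranch B)
    (hx : x ∈ w.support) (hxB : x ∉ B) {y : V} (hxy : G.Adj x y) : s(x, y) ∈ w.edges :=
  hw.isTrail.mem_edges_of_degree_le_two hx (fun h => hxB (h ▸ hw.start_mem))
    (fun h => hxB (h ▸ hw.end_mem)) (hdeg x hxB) hxy

variable {s₁ t₁ s₂ t₂ : V} {w₁ : G.Walk s₁ t₁} {w₂ : G.Walk s₂ t₂}

theorem edges_subset_of_mem_edges (hdeg : ∀ x ∉ B, G.degree x ≤ 2) (hw₁ : w₁.IsBranch B)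
    (hw₂ : w₂.IsBranch B) {e : Sym2 V} (he₁ : e ∈ w₁.edges) (he₂ : e ∈ w₂.edges) :
    w₁.edges ⊆ w₂.edges :=
  forall_mem_edges_of_mem_edges (E := {e | e ∈ w₂.edges})
    (fun _ hxB _ _ hxz hxy => hw₂.mem_edges_of_adj hdeg (w₂.fst_mem_support_of_mem_edges hxy)
      hxB hxz)
    w₁ hw₁.tail_nodup hw₁.eq_end_of_mem e he₁ he₂

theorem support_subset_of_mem_edges (hdeg : ∀ x ∉ B, G.degree x ≤ 2) (hw₁ : w₁.IsBranch B)
    (hw₂ : w₂.IsBranch B) {e : Sym2 V} (he₁ : e ∈ w₁.edges) (he₂ : e ∈ w₂.edges) :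
    w₁.support ⊆ w₂.support := fun x hx => by
  obtain ⟨f, hf, hxf⟩ := (mem_support_iff_exists_mem_edges_of_not_nil hw₁.not_nil).1 hx
  exact mem_support_iff_exists_mem_edges.2
    (Or.inr ⟨f, edges_subset_of_mem_edges hdeg hw₁ hw₂ he₁ he₂ hf, hxf⟩)

theorem mem_of_mem_support_of_edges_disjoint (hdeg : ∀ x ∉ B, G.degree x ≤ 2)
    (hw₁ : w₁.IsBranch B) (hw₂ : w₂.IsBranch B) (hdisj : ∀ e ∈ w₁.edges, e ∉ w₂.edges)
    (hx₁ : x ∈ w₁.support) (hx₂ : x ∈ w₂.support) : x ∈ B := by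
  by_contra hxB
  obtain ⟨e, he, hxe⟩ := (mem_support_iff_exists_mem_edges_of_not_nil hw₁.not_nil).1 hx₁
  obtain ⟨y, rfl⟩ := Sym2.mem_iff_exists.1 hxe
  exact hdisj _ he (hw₂.mem_edges_of_adj hdeg hx₂ hxB (w₁.adj_of_mem_edges he))

theorem mem_of_mem_support_of_not_mem (hdeg : ∀ x ∉ B, G.degree x ≤ 2)
    (hw₁ : w₁.IsBranch B) (hw₂ : w₂.IsBranch B) {b : V} (hb₁ : b ∈ w₁.support)
    (hb₂ : b ∉ w₂.support) (hx₁ : x ∈ w₁.support) (hx₂ : x ∈ w₂.support) : x ∈ B :=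
  hw₁.mem_of_mem_support_of_edges_disjoint hdeg hw₂
    (fun _ he₁ he₂ => hb₂ (support_subset_of_mem_edges hdeg hw₁ hw₂ he₁ he₂ hb₁)) hx₁ hx₂

theorem edges_disjoint_of_snd_ne (hdeg : ∀ x ∉ B, G.degree x ≤ 2) {w₁ : G.Walk s t₁}
    {w₂ : G.Walk s t₂} (hw₁ : w₁.IsBranch B) (hst : s ≠ t₁) (hw₂ : w₂.IsBranch B)
    (hsnd : w₁.snd ≠ w₂.snd) : ∀ e ∈ w₁.edges, e ∉ w₂.edges := fun _ he₁ he₂ =>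
  hsnd ((hw₁.isPath hst).eq_snd_of_mem_edges
    (edges_subset_of_mem_edges hdeg hw₂ hw₁ he₂ he₁ (mk_start_snd_mem_edges hw₂.not_nil))).symm

end IsBranch

theorem exists_isBranch_cons_of_isTrail {B : Set V} (hdeg : ∀ x ∉ B, G.degree x = 2)
    {a t : V} (hs : s ∈ B) (h : G.Adj s a) (q : G.Walk a t) (hq : (cons h q).IsTrail)
    (hnd : q.support.Nodup) (hB : ∀ x ∈ q.support, x ∈ B → x = t) :
    ∃ (t' : V) (q' : G.Walk a t'), (cons h q').IsBranch B := by
  by_cases ht : t ∈ B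
  · exact ⟨t, q, hq, not_nil_cons, hnd, hs, ht, hB⟩
  obtain ⟨y, hty, hy⟩ :=
    hq.exists_adj_not_mem_edges (fun h => ht (h ▸ hs)) (hdeg t ht ▸ even_two)
  have hyq : y ∉ q.support := fun hyq => by
    have hyB : y ∉ B := fun hyB => ht (hB y hyq hyB ▸ hyB)
    refine hy (Sym2.eq_swap ▸ hq.mem_edges_of_degree_le_two (List.mem_cons_of_mem _ hyq)
      (fun h => hyB (h ▸ hs)) hty.ne' (hdeg y hyB).le hty.symm)
  have htrail : (cons h (q.concat hty)).IsTrail := by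
    rw [← concat_cons, isTrail_def, edges_concat]
    exact hq.edges_nodup.concat hy
  refine exists_isBranch_cons_of_isTrail hdeg hs h (q.concat hty) htrail
    (by rw [support_concat, ← List.concat_eq_append]; exact hnd.concat hyq) fun x hx hxB => ?_
  rw [support_concat, List.mem_append, List.mem_singleton] at hx
  exact hx.resolve_left fun hx => ht (hB x hx hxB ▸ hxB)
termination_by #G.edgeFinset - q.length
decreasing_by
  have := htrail.length_le_card_edgeFinset
  simp only [length_cons, length_concat] at this ⊢
  omega

theorem exists_isBranch {B : Set V} (hdeg : ∀ x ∉ B, G.degree x = 2) {a : V} (hs : s ∈ B)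
    (h : G.Adj s a) : ∃ (t : V) (w : G.Walk s t), w.IsBranch B ∧ w.snd = a := by
  obtain ⟨t, q, hq⟩ := exists_isBranch_cons_of_isTrail hdeg hs h nil (by simp)
    (List.nodup_singleton a) (by simp)
  exact ⟨t, cons h q, hq, snd_cons q h⟩

end Degree

end Walk

def IsTheta {u v : V} (p₁ p₂ p₃ : G.Walk u v) : Prop :=
  p₁.IsPath ∧ p₂.IsPath ∧ p₃.IsPath ∧
    (∀ x : V, x ∈ p₁.support → x ∈ p₂.support → x = u ∨ x = v) ∧
    (∀ x : V, x ∈ p₁.support → x ∈ p₃.support → x = u ∨ x = v) ∧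
    (∀ x : V, x ∈ p₂.support → x ∈ p₃.support → x = u ∨ x = v) ∧
    (∀ e : Sym2 V, e ∈ p₁.edges → e ∉ p₂.edges) ∧
    (∀ e : Sym2 V, e ∈ p₁.edges → e ∉ p₃.edges) ∧
    (∀ e : Sym2 V, e ∈ p₂.edges → e ∉ p₃.edges) ∧
    (∀ e ∈ G.edgeSet, e ∈ p₁.edges ∨ e ∈ p₂.edges ∨ e ∈ p₃.edges)

def IsDumbbell {u v : V} (c₁ : G.Walk u u) (c₂ : G.Walk v v) (p : G.Walk u v) : Prop :=
  c₁.IsCycle ∧ c₂.IsCycle ∧ p.IsPath ∧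
    (∀ x : V, x ∈ c₁.support → x ∉ c₂.support) ∧
    (∀ x : V, x ∈ p.support → x ∈ c₁.support → x = u) ∧
    (∀ x : V, x ∈ p.support → x ∈ c₂.support → x = v) ∧
    (∀ e ∈ G.edgeSet, e ∈ c₁.edges ∨ e ∈ c₂.edges ∨ e ∈ p.edges)

theorem IsTheta.reverse {u v : V} {p₁ p₂ p₃ : G.Walk u v} (h : IsTheta p₁ p₂ p₃) :
    IsTheta p₁.reverse p₂.reverse p₃.reverse := by
  unfold IsTheta at *
  simpa [or_comm] using h

variable [Fintype V] [DecidableRel G.Adj] {x : V}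

theorem exists_adj_ne_ne_of_degree_eq_three (hx : G.degree x = 3) {y₁ y₂ : V}
    (h₁ : G.Adj x y₁) (h₂ : G.Adj x y₂) (hne : y₁ ≠ y₂) :
    ∃ z, G.Adj x z ∧ z ≠ y₁ ∧ z ≠ y₂ ∧ ∀ y, G.Adj x y → y = y₁ ∨ y = y₂ ∨ y = z := by
  classical
  have hsub : {y₁, y₂} ⊆ G.neighborFinset x := by
    simp [insert_subset_iff, h₁, h₂]
  obtain ⟨z, hz⟩ : ∃ z, G.neighborFinset x \ {y₁, y₂} = {z} := by
    rw [← card_eq_one, card_sdiff_of_subset hsub, card_pair hne, card_neighborFinset_eq_degree, hx]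
  have hmem : ∀ y, y ∈ G.neighborFinset x \ {y₁, y₂} ↔ y = z := by simp [hz]
  refine ⟨z, ?_⟩
  simp only [mem_sdiff, mem_neighborFinset, mem_insert, mem_singleton] at hmem
  grind

theorem eq_or_eq_or_eq_of_degree_eq_three (hx : G.degree x = 3) {y₁ y₂ y₃ : V}
    (h₁ : G.Adj x y₁) (h₂ : G.Adj x y₂) (h₃ : G.Adj x y₃) (h₁₂ : y₁ ≠ y₂) (h₁₃ : y₁ ≠ y₃)
    (h₂₃ : y₂ ≠ y₃) {y : V} (hy : G.Adj x y) : y = y₁ ∨ y = y₂ ∨ y = y₃ := by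
  obtain ⟨z, -, -, -, hz⟩ := exists_adj_ne_ne_of_degree_eq_three hx h₁ h₂ h₁₂
  obtain rfl : y₃ = z := by grind
  exact hz y hy

open Walk

variable {B : Set V} {s s' : V}

theorem Connected.edgeSet_subset_of_isBranch (hconn : G.Connected)
    (hdeg : ∀ x ∉ B, G.degree x ≤ 2) {s₁ t₁ s₂ t₂ s₃ t₃ : V} {w₁ : G.Walk s₁ t₁}
    {w₂ : G.Walk s₂ t₂} {w₃ : G.Walk s₃ t₃} (hw₁ : w₁.IsBranch B) (hw₂ : w₂.IsBranch B)
    (hw₃ : w₃.IsBranch B)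
    (hB : ∀ x ∈ B, ∀ y, G.Adj x y → s(x, y) ∈ w₁.edges ∨ s(x, y) ∈ w₂.edges ∨ s(x, y) ∈ w₃.edges) :
    ∀ e ∈ G.edgeSet, e ∈ w₁.edges ∨ e ∈ w₂.edges ∨ e ∈ w₃.edges := by
  refine hconn.edgeSet_subset_of_forall_adj ⟨s₁, hw₁.start_mem⟩ hB ?_
  rintro x hxB y z hxz (h | h | h)
  exacts [Or.inl (hw₁.mem_edges_of_adj hdeg (w₁.fst_mem_support_of_mem_edges h) hxB hxz),
    Or.inr (Or.inl (hw₂.mem_edges_of_adj hdeg (w₂.fst_mem_support_of_mem_edges h) hxB hxz)),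
    Or.inr (Or.inr (hw₃.mem_edges_of_adj hdeg (w₃.fst_mem_support_of_mem_edges h) hxB hxz))]

theorem isTheta_of_isBranch (hconn : G.Connected) (hdeg : ∀ x ∉ B, G.degree x ≤ 2)
    (hB : B ⊆ {s, s'}) (hss' : s ≠ s') (hs : G.degree s = 3) (hs' : G.degree s' = 3)
    {w₁ w₂ w₃ : G.Walk s s'} (hw₁ : w₁.IsBranch B) (hw₂ : w₂.IsBranch B) (hw₃ : w₃.IsBranch B)
    (h₁₂ : w₁.snd ≠ w₂.snd) (h₁₃ : w₁.snd ≠ w₃.snd) (h₂₃ : w₂.snd ≠ w₃.snd) :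
    IsTheta w₁ w₂ w₃ := by
  have d₁₂ := hw₁.edges_disjoint_of_snd_ne hdeg hss' hw₂ h₁₂
  have d₁₃ := hw₁.edges_disjoint_of_snd_ne hdeg hss' hw₃ h₁₃
  have d₂₃ := hw₂.edges_disjoint_of_snd_ne hdeg hss' hw₃ h₂₃
  have hlast : ∀ {w : G.Walk s s'}, w.IsBranch B → s(s', w.penultimate) ∈ w.edges :=
    fun hw => Sym2.eq_swap ▸ mk_penultimate_end_mem_edges hw.not_nil
  have hpen : ∀ {w w' : G.Walk s s'}, w.IsBranch B → w'.IsBranch B →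
      (∀ e ∈ w.edges, e ∉ w'.edges) → w.penultimate ≠ w'.penultimate :=
    fun hw hw' hd heq => hd _ (hlast hw) (heq ▸ hlast hw')
  refine ⟨hw₁.isPath hss', hw₂.isPath hss', hw₃.isPath hss',
    fun _ h h' => hB (hw₁.mem_of_mem_support_of_edges_disjoint hdeg hw₂ d₁₂ h h'),
    fun _ h h' => hB (hw₁.mem_of_mem_support_of_edges_disjoint hdeg hw₃ d₁₃ h h'),
    fun _ h h' => hB (hw₂.mem_of_mem_support_of_edges_disjoint hdeg hw₃ d₂₃ h h'),
    d₁₂, d₁₃, d₂₃, hconn.edgeSet_subset_of_isBranch hdeg hw₁ hw₂ hw₃ fun x hx y hy => ?_⟩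
  rcases hB hx with rfl | rfl
  · rcases eq_or_eq_or_eq_of_degree_eq_three hs (w₁.adj_snd hw₁.not_nil)
      (w₂.adj_snd hw₂.not_nil) (w₃.adj_snd hw₃.not_nil) h₁₂ h₁₃ h₂₃ hy with rfl | rfl | rfl
    exacts [Or.inl (mk_start_snd_mem_edges hw₁.not_nil),
      Or.inr (Or.inl (mk_start_snd_mem_edges hw₂.not_nil)),
      Or.inr (Or.inr (mk_start_snd_mem_edges hw₃.not_nil))]
  · rcases eq_or_eq_or_eq_of_degree_eq_three hs' (w₁.adj_penultimate hw₁.not_nil).symm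
      (w₂.adj_penultimate hw₂.not_nil).symm (w₃.adj_penultimate hw₃.not_nil).symm
      (hpen hw₁ hw₂ d₁₂) (hpen hw₁ hw₃ d₁₃) (hpen hw₂ hw₃ d₂₃) hy with rfl | rfl | rfl
    exacts [Or.inl (hlast hw₁), Or.inr (Or.inl (hlast hw₂)), Or.inr (Or.inr (hlast hw₃))]

theorem Walk.IsBranch.exists_isBranch_of_loop (hdeg : ∀ x ∉ B, G.degree x = 2)
    (hB : B ⊆ {s, s'}) (hs : G.degree s = 3) {c : G.Walk s s} (hc : c.IsBranch B) :
    ∃ p : G.Walk s s', p.IsBranch B ∧ ∀ y, G.Adj s y → s(s, y) ∈ c.edges ∨ s(s, y) ∈ p.edges := by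
  have hdeg' : ∀ x ∉ B, G.degree x ≤ 2 := fun x hx => (hdeg x hx).le
  have hcyc := hc.isCycle
  obtain ⟨z, hz, hz₁, hz₂, hN⟩ := exists_adj_ne_ne_of_degree_eq_three hs
    (c.adj_snd hc.not_nil) (c.adj_penultimate hc.not_nil).symm hcyc.snd_ne_penultimate
  have hmem : ∀ y, G.Adj s y → y ≠ z → s(s, y) ∈ c.edges := by
    intro y hy hyz
    rcases hN y hy with rfl | rfl | rfl
    · exact mk_start_snd_mem_edges hc.not_nil
    · exact Sym2.eq_swap ▸ mk_penultimate_end_mem_edges hc.not_nil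
    · exact absurd rfl hyz
  obtain ⟨t, p, hp, rfl⟩ := exists_isBranch hdeg hc.start_mem hz
  have hdisj : ∀ e ∈ p.edges, e ∉ c.edges := fun e he hec => by
    rcases hcyc.eq_snd_or_eq_penultimate_of_mem_edges (hp.edges_subset_of_mem_edges hdeg' hc he hec
      (mk_start_snd_mem_edges hp.not_nil)) with h | h
    exacts [hz₁ h, hz₂ h]
  obtain rfl | rfl : t = s ∨ t = s' := hB hp.end_mem
  · exact (hdisj _ (Sym2.eq_swap ▸ mk_penultimate_end_mem_edges hp.not_nil)
      (hmem _ (adj_penultimate hp.not_nil).symm hp.isCycle.snd_ne_penultimate.symm)).elim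
  · refine ⟨p, hp, fun y hy => ?_⟩
    rcases eq_or_ne y p.snd with rfl | hyz
    exacts [Or.inr (mk_start_snd_mem_edges hp.not_nil), Or.inl (hmem y hy hyz)]

theorem exists_isTheta_or_exists_isBranch_loop (hconn : G.Connected)
    (hdeg : ∀ x ∉ B, G.degree x = 2) (hB : B = {s, s'}) (hss' : s ≠ s')
    (hs : G.degree s = 3) (hs' : G.degree s' = 3) :
    (∃ w₁ w₂ w₃ : G.Walk s s', IsTheta w₁ w₂ w₃) ∨ ∃ c : G.Walk s s, c.IsBranch B := by
  classical
  subst hB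
  refine or_iff_not_imp_right.2 fun hloop => ?_
  have branch : ∀ y, G.Adj s y → ∃ w : G.Walk s s', w.IsBranch {s, s'} ∧ w.snd = y := by
    intro y hy
    obtain ⟨t, w, hw, rfl⟩ := exists_isBranch hdeg (Set.mem_insert s {s'}) hy
    obtain rfl | rfl := hw.end_mem
    · exact absurd ⟨w, hw⟩ hloop
    · exact ⟨w, hw, rfl⟩
  obtain ⟨a, b, c, hab, hac, hbc, hN⟩ :=
    card_eq_three.1 ((card_neighborFinset_eq_degree G s).trans hs)
  have hadj : ∀ y ∈ ({a, b, c} : Finset V), G.Adj s y :=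
    fun y hy => (mem_neighborFinset G s y).1 (hN ▸ hy)
  obtain ⟨w₁, hw₁, rfl⟩ := branch a (hadj a (by simp))
  obtain ⟨w₂, hw₂, rfl⟩ := branch b (hadj b (by simp))
  obtain ⟨w₃, hw₃, rfl⟩ := branch c (hadj c (by simp))
  exact ⟨w₁, w₂, w₃, isTheta_of_isBranch hconn (fun x hx => (hdeg x hx).le) subset_rfl hss' hs hs'
    hw₁ hw₂ hw₃ hab hac hbc⟩

theorem exists_isDumbbell {u v : V} (hconn : G.Connected) (hdeg : ∀ x ∉ B, G.degree x = 2)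
    (hB : B ⊆ {u, v}) (huv : u ≠ v) (hu : G.degree u = 3) (hv : G.degree v = 3)
    {c₁ : G.Walk u u} {c₂ : G.Walk v v} (hc₁ : c₁.IsBranch B) (hc₂ : c₂.IsBranch B) :
    ∃ p, IsDumbbell c₁ c₂ p := by
  have hdeg' : ∀ x ∉ B, G.degree x ≤ 2 := fun x hx => (hdeg x hx).le
  obtain ⟨p, hp, hcov₁⟩ := hc₁.exists_isBranch_of_loop hdeg hB hu
  obtain ⟨p', hp', hcov₂⟩ :=
    hc₂.exists_isBranch_of_loop hdeg (hB.trans (Set.pair_comm u v).subset) hv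
  have hv₁ : v ∉ c₁.support := fun h =>
    huv ((hc₁.eq_or_eq_of_mem_support h hc₂.start_mem).elim Eq.symm Eq.symm)
  have hu₂ : u ∉ c₂.support := fun h =>
    huv ((hc₂.eq_or_eq_of_mem_support h hc₁.start_mem).elim id id)
  have hp'p : p'.edges ⊆ p.edges := by
    have hlast := mk_penultimate_end_mem_edges hp'.not_nil
    rcases hcov₁ _ (adj_penultimate hp'.not_nil).symm with h | h
    · exact absurd (hp'.support_subset_of_mem_edges hdeg' hc₁ hlast (Sym2.eq_swap ▸ h)
        p'.start_mem_support) hv₁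
    · exact hp'.edges_subset_of_mem_edges hdeg' hp hlast (Sym2.eq_swap ▸ h)
  refine ⟨p, hc₁.isCycle, hc₂.isCycle, hp.isPath huv, fun x hx₁ hx₂ => ?_, fun x hx hx₁ => ?_,
    fun x hx hx₂ => ?_, hconn.edgeSet_subset_of_isBranch hdeg' hc₁ hc₂ hp fun x hx y hy => ?_⟩
  · rcases hB (hc₁.mem_of_mem_support_of_not_mem hdeg' hc₂ c₁.start_mem_support hu₂ hx₁ hx₂)
      with rfl | rfl
    exacts [hu₂ hx₂, hv₁ hx₁]
  · rcases hB (hp.mem_of_mem_support_of_not_mem hdeg' hc₁ p.end_mem_support hv₁ hx hx₁)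
      with rfl | rfl
    exacts [rfl, absurd hx₁ hv₁]
  · rcases hB (hp.mem_of_mem_support_of_not_mem hdeg' hc₂ p.start_mem_support hu₂ hx hx₂)
      with rfl | rfl
    exacts [absurd hx₂ hu₂, rfl]
  rcases hB hx with rfl | rfl
  · exact (hcov₁ y hy).elim Or.inl (Or.inr ∘ Or.inr)
  · exact (hcov₂ y hy).elim (Or.inr ∘ Or.inl) fun h => Or.inr (Or.inr (hp'p h))

end SimpleGraph

open SimpleGraph in
theorem stmt_2_general {V : Type*} [Fintype V]
    (G : SimpleGraph V) [DecidableRel G.Adj]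
    (hconn : G.Connected) (u v : V) (huv : u ≠ v)
    (hu : G.degree u = 3) (hv : G.degree v = 3)
    (hother : ∀ w : V, w ≠ u → w ≠ v → G.degree w = 2) :
    (∃ p₁ p₂ p₃ : G.Walk u v, p₁.IsPath ∧ p₂.IsPath ∧ p₃.IsPath ∧
      (∀ x : V, x ∈ p₁.support → x ∈ p₂.support → x = u ∨ x = v) ∧
      (∀ x : V, x ∈ p₁.support → x ∈ p₃.support → x = u ∨ x = v) ∧
      (∀ x : V, x ∈ p₂.support → x ∈ p₃.support → x = u ∨ x = v) ∧
      (∀ e : Sym2 V, e ∈ p₁.edges → e ∉ p₂.edges) ∧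
      (∀ e : Sym2 V, e ∈ p₁.edges → e ∉ p₃.edges) ∧
      (∀ e : Sym2 V, e ∈ p₂.edges → e ∉ p₃.edges) ∧
      (∀ e ∈ G.edgeSet, e ∈ p₁.edges ∨ e ∈ p₂.edges ∨ e ∈ p₃.edges)) ∨
    (∃ (c₁ : G.Walk u u) (c₂ : G.Walk v v) (p : G.Walk u v),
      c₁.IsCycle ∧ c₂.IsCycle ∧ p.IsPath ∧
      (∀ x : V, x ∈ c₁.support → x ∉ c₂.support) ∧
      (∀ x : V, x ∈ p.support → x ∈ c₁.support → x = u) ∧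
      (∀ x : V, x ∈ p.support → x ∈ c₂.support → x = v) ∧
      (∀ e ∈ G.edgeSet, e ∈ c₁.edges ∨ e ∈ c₂.edges ∨ e ∈ p.edges)) := by
  have hdeg : ∀ x ∉ ({u, v} : Set V), G.degree x = 2 :=
    fun x hx => hother x (fun h => hx (Or.inl h)) fun h => hx (Or.inr h)
  rcases exists_isTheta_or_exists_isBranch_loop hconn hdeg rfl huv hu hv with h | ⟨c₁, hc₁⟩
  · exact Or.inl h
  rcases exists_isTheta_or_exists_isBranch_loop hconn hdeg (Set.pair_comm u v) huv.symm hv hu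
    with ⟨w₁, w₂, w₃, h⟩ | ⟨c₂, hc₂⟩
  · exact Or.inl ⟨_, _, _, h.reverse⟩
  · obtain ⟨p, hp⟩ := exists_isDumbbell hconn hdeg subset_rfl huv hu hv hc₁ hc₂
    exact Or.inr ⟨c₁, c₂, p, hp⟩

/-- A finite connected simple graph with exactly two vertices `u ≠ v` of degree 3
and all other vertices of degree 2 is either a theta graph (three internally
vertex-disjoint, pairwise edge-disjoint `u`–`v` paths covering all edges) or a
dumbbell graph (two vertex-disjoint cycles through `u` and `v` joined by a path
meeting them only in its endpoints, covering all edges). -/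
theorem stmt_2 {V : Type*} [Fintype V] [DecidableEq V]
    (G : SimpleGraph V) [DecidableRel G.Adj]
    (hconn : G.Connected) (u v : V) (huv : u ≠ v)
    (hu : G.degree u = 3) (hv : G.degree v = 3)
    (hother : ∀ w : V, w ≠ u → w ≠ v → G.degree w = 2) :
    (∃ p₁ p₂ p₃ : G.Walk u v, p₁.IsPath ∧ p₂.IsPath ∧ p₃.IsPath ∧
      (∀ x : V, x ∈ p₁.support → x ∈ p₂.support → x = u ∨ x = v) ∧
      (∀ x : V, x ∈ p₁.support → x ∈ p₃.support → x = u ∨ x = v) ∧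
      (∀ x : V, x ∈ p₂.support → x ∈ p₃.support → x = u ∨ x = v) ∧
      (∀ e : Sym2 V, e ∈ p₁.edges → e ∉ p₂.edges) ∧
      (∀ e : Sym2 V, e ∈ p₁.edges → e ∉ p₃.edges) ∧
      (∀ e : Sym2 V, e ∈ p₂.edges → e ∉ p₃.edges) ∧
      (∀ e ∈ G.edgeSet, e ∈ p₁.edges ∨ e ∈ p₂.edges ∨ e ∈ p₃.edges)) ∨
    (∃ (c₁ : G.Walk u u) (c₂ : G.Walk v v) (p : G.Walk u v),
      c₁.IsCycle ∧ c₂.IsCycle ∧ p.IsPath ∧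
      (∀ x : V, x ∈ c₁.support → x ∉ c₂.support) ∧
      (∀ x : V, x ∈ p.support → x ∈ c₁.support → x = u) ∧
      (∀ x : V, x ∈ p.support → x ∈ c₂.support → x = v) ∧
      (∀ e ∈ G.edgeSet, e ∈ c₁.edges ∨ e ∈ c₂.edges ∨ e ∈ p.edges)) :=
  stmt_2_general G hconn u v huv hu hv hother
end

section
/- Let m ≥ 0 and n ≥ 1 be integers. A pair (c₁,c₂) ∈ ℤ² can be written as (c₁,c₂) = Σ_{i=1}^{m+n+2} δᵢ·(1,0) + Σ_{j=1}^{n+1} εⱼ·(0,1) + Σ_{k=1}^{m+1} ζ_k·(−1,0) + Σ_{l=1}^{n+1} η_l·(−1,−1) for some real numbers δᵢ, εⱼ, ζ_k, η_l all lying in the half-open interval (−1, 0], if and only if |c₁| ≤ m+n+1, |c₂| ≤ n, and |c₁ − c₂| ≤ m+n+1. -/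
/-! Each weight family with multiplicity `N` contributes, coordinatewise, an arbitrary real number
of `(-N, 0]`, so the class `(c₁, c₂)` is strongly critical iff `c₁ = a - d - e` and `c₂ = b - e`
with `a ∈ (-(m+n+2), 0]`, `b, e ∈ (-(n+1), 0]`, `d ∈ (-(m+1), 0]`. Necessity of the three bounds is
then linear arithmetic plus integrality. For sufficiency, take
`e = min 0 (min (-c₂) (m + 1/2 - c₁))`; the `1/2` keeps `c₁ + e` strictly inside `(-(m+n+2), m+1)`,
the range of `a - d`. -/

open Set

lemma sum_mem_Ioc_of_forall_mem_Ioc {N : ℕ} [NeZero N] {f : Fin N → ℝ}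
    (hf : ∀ i, f i ∈ Ioc (-1 : ℝ) 0) : ∑ i, f i ∈ Ioc (-(N : ℝ)) 0 := by
  constructor
  · simpa using Finset.sum_lt_sum_of_nonempty Finset.univ_nonempty fun i _ => (hf i).1
  · exact Finset.sum_nonpos fun i _ => (hf i).2

lemma exists_forall_mem_Ioc_sum_eq {N : ℕ} [NeZero N] {s : ℝ} (hs : s ∈ Ioc (-(N : ℝ)) 0) :
    ∃ f : Fin N → ℝ, (∀ i, f i ∈ Ioc (-1 : ℝ) 0) ∧ ∑ i, f i = s := by
  have hN : (0 : ℝ) < N := Nat.cast_pos.2 (NeZero.pos N)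
  refine ⟨fun _ => s / N, fun _ => ⟨?_, div_nonpos_of_nonpos_of_nonneg hs.2 hN.le⟩, ?_⟩
  · rw [lt_div_iff₀ hN]; linarith [hs.1]
  · simp [Finset.sum_const, field]

lemma exists_mem_Ioc_sub_eq {p q x : ℝ} (hp : 0 < p) (hq : 0 < q) (hx : x ∈ Ioo (-p) q) :
    ∃ a ∈ Ioc (-p) 0, ∃ d ∈ Ioc (-q) 0, x = a - d := by
  refine ⟨min x 0, ⟨lt_min hx.1 (by linarith), min_le_right _ _⟩,
    min (-x) 0, ⟨lt_min (by linarith [hx.2]) (by linarith), min_le_right _ _⟩, ?_⟩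
  rcases le_total x 0 with h | h <;> simp [h]

lemma abs_le_of_lt_of_lt {x k : ℤ} (h₁ : -((k : ℝ) + 1) < x) (h₂ : (x : ℝ) < k + 1) :
    |x| ≤ k := by
  have h₁' : -(k + 1) < x := by exact_mod_cast h₁
  have h₂' : x < k + 1 := by exact_mod_cast h₂
  exact abs_le.2 ⟨by omega, by omega⟩

lemma prod_eq_weighted_sum_iff {ι κ μ ν : Type*} [Fintype ι] [Fintype κ] [Fintype μ] [Fintype ν]
    (x y : ℝ) (δ : ι → ℝ) (ε : κ → ℝ) (ζ : μ → ℝ) (η : ν → ℝ) :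
    (x, y) = (∑ i, δ i • ((1 : ℝ), (0 : ℝ))) + (∑ j, ε j • ((0 : ℝ), (1 : ℝ))) +
        (∑ k, ζ k • ((-1 : ℝ), (0 : ℝ))) + (∑ l, η l • ((-1 : ℝ), (-1 : ℝ))) ↔
      x = ∑ i, δ i - ∑ k, ζ k - ∑ l, η l ∧ y = ∑ j, ε j - ∑ l, η l := by
  simp [Prod.ext_iff, Prod.fst_sum, Prod.snd_sum, sub_eq_add_neg]

lemma exists_Ioc_decomposition_iff (m n : ℕ) (c₁ c₂ : ℤ) :
    (∃ a ∈ Ioc (-((m + n + 2 : ℕ) : ℝ)) 0, ∃ b ∈ Ioc (-((n + 1 : ℕ) : ℝ)) 0,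
      ∃ d ∈ Ioc (-((m + 1 : ℕ) : ℝ)) 0, ∃ e ∈ Ioc (-((n + 1 : ℕ) : ℝ)) 0,
        (c₁ : ℝ) = a - d - e ∧ (c₂ : ℝ) = b - e) ↔
      |c₁| ≤ (m : ℤ) + n + 1 ∧ |c₂| ≤ (n : ℤ) ∧ |c₁ - c₂| ≤ (m : ℤ) + n + 1 := by
  push_cast
  constructor
  · rintro ⟨a, ⟨ha₁, ha₂⟩, b, ⟨hb₁, hb₂⟩, d, ⟨hd₁, hd₂⟩, e, ⟨he₁, he₂⟩, h₁, h₂⟩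
    refine ⟨abs_le_of_lt_of_lt ?_ ?_, abs_le_of_lt_of_lt ?_ ?_, abs_le_of_lt_of_lt ?_ ?_⟩ <;>
      push_cast <;> linarith
  · rintro ⟨h₁, h₂, h₃⟩
    obtain ⟨h₁l, h₁u⟩ := abs_le.1 h₁
    obtain ⟨h₂l, h₂u⟩ := abs_le.1 h₂
    obtain ⟨h₃l, h₃u⟩ := abs_le.1 h₃
    have r₁l : -((m : ℝ) + n + 1) ≤ c₁ := by exact_mod_cast h₁l
    have r₁u : (c₁ : ℝ) ≤ m + n + 1 := by exact_mod_cast h₁u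
    have r₂l : -(n : ℝ) ≤ c₂ := by exact_mod_cast h₂l
    have r₂u : (c₂ : ℝ) ≤ n := by exact_mod_cast h₂u
    have r₃l : -((m : ℝ) + n + 1) ≤ c₁ - c₂ := by exact_mod_cast h₃l
    have r₃u : (c₁ : ℝ) - c₂ ≤ m + n + 1 := by exact_mod_cast h₃u
    set e : ℝ := min 0 (min (-c₂) (m + 1 / 2 - c₁))
    have he_le : e ≤ 0 ∧ e ≤ -c₂ ∧ e ≤ m + 1 / 2 - c₁ :=
      ⟨min_le_left _ _, (min_le_right _ _).trans (min_le_left _ _),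
        (min_le_right _ _).trans (min_le_right _ _)⟩
    have lt_e {L : ℝ} (hL₀ : L < 0) (hL₂ : L < -c₂) (hL₁ : L < m + 1 / 2 - c₁) : L < e :=
      lt_min hL₀ (lt_min hL₂ hL₁)
    obtain ⟨a, ha, d, hd, had⟩ := exists_mem_Ioc_sub_eq (x := c₁ + e) (p := m + n + 2)
      (q := m + 1) (by positivity) (by positivity)
      ⟨by linarith [lt_e (L := -(m + n + 2 + c₁)) (by linarith) (by linarith) (by linarith)],
        by linarith [he_le.2.2]⟩
    refine ⟨a, ha, c₂ + e, ⟨?_, by linarith [he_le.2.1]⟩, d, hd, e,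
      ⟨lt_e (by linarith) (by linarith) (by linarith), he_le.1⟩, by linarith, by ring⟩
    linarith [lt_e (L := -(n + 1 + c₂)) (by linarith) (by linarith) (by linarith)]

theorem stmt_4_general (m n : ℕ) (c₁ c₂ : ℤ) :
    (∃ (δ : Fin (m + n + 2) → ℝ) (ε : Fin (n + 1) → ℝ)
        (ζ : Fin (m + 1) → ℝ) (η : Fin (n + 1) → ℝ),
      (∀ i, δ i ∈ Set.Ioc (-1 : ℝ) 0) ∧ (∀ j, ε j ∈ Set.Ioc (-1 : ℝ) 0) ∧
      (∀ k, ζ k ∈ Set.Ioc (-1 : ℝ) 0) ∧ (∀ l, η l ∈ Set.Ioc (-1 : ℝ) 0) ∧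
      ((c₁ : ℝ), (c₂ : ℝ)) =
        (∑ i, δ i • ((1 : ℝ), (0 : ℝ))) + (∑ j, ε j • ((0 : ℝ), (1 : ℝ))) +
        (∑ k, ζ k • ((-1 : ℝ), (0 : ℝ))) + (∑ l, η l • ((-1 : ℝ), (-1 : ℝ)))) ↔
    (|c₁| ≤ (m : ℤ) + n + 1 ∧ |c₂| ≤ (n : ℤ) ∧ |c₁ - c₂| ≤ (m : ℤ) + n + 1) := by
  simp only [prod_eq_weighted_sum_iff, ← exists_Ioc_decomposition_iff]
  constructor
  · rintro ⟨δ, ε, ζ, η, hδ, hε, hζ, hη, h₁, h₂⟩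
    exact ⟨_, sum_mem_Ioc_of_forall_mem_Ioc hδ, _, sum_mem_Ioc_of_forall_mem_Ioc hε,
      _, sum_mem_Ioc_of_forall_mem_Ioc hζ, _, sum_mem_Ioc_of_forall_mem_Ioc hη, h₁, h₂⟩
  · rintro ⟨a, ha, b, hb, d, hd, e, he, h₁, h₂⟩
    obtain ⟨δ, hδ, rfl⟩ := exists_forall_mem_Ioc_sum_eq ha
    obtain ⟨ε, hε, rfl⟩ := exists_forall_mem_Ioc_sum_eq hb
    obtain ⟨ζ, hζ, rfl⟩ := exists_forall_mem_Ioc_sum_eq hd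
    obtain ⟨η, hη, rfl⟩ := exists_forall_mem_Ioc_sum_eq he
    exact ⟨δ, ε, ζ, η, hδ, hε, hζ, hη, h₁, h₂⟩

/-- Type (I): the strongly critical integer points for the weights
(1,0)×(m+n+2), (0,1)×(n+1), (−1,0)×(m+1), (−1,−1)×(n+1) are exactly the
integer points of the conic region. -/
theorem stmt_4 (m n : ℕ) (hn : 1 ≤ n) (c₁ c₂ : ℤ) :
    (∃ (δ : Fin (m + n + 2) → ℝ) (ε : Fin (n + 1) → ℝ)
        (ζ : Fin (m + 1) → ℝ) (η : Fin (n + 1) → ℝ),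
      (∀ i, δ i ∈ Set.Ioc (-1 : ℝ) 0) ∧ (∀ j, ε j ∈ Set.Ioc (-1 : ℝ) 0) ∧
      (∀ k, ζ k ∈ Set.Ioc (-1 : ℝ) 0) ∧ (∀ l, η l ∈ Set.Ioc (-1 : ℝ) 0) ∧
      ((c₁ : ℝ), (c₂ : ℝ)) =
        (∑ i, δ i • ((1 : ℝ), (0 : ℝ))) + (∑ j, ε j • ((0 : ℝ), (1 : ℝ))) +
        (∑ k, ζ k • ((-1 : ℝ), (0 : ℝ))) + (∑ l, η l • ((-1 : ℝ), (-1 : ℝ)))) ↔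
    (|c₁| ≤ (m : ℤ) + n + 1 ∧ |c₂| ≤ (n : ℤ) ∧ |c₁ - c₂| ≤ (m : ℤ) + n + 1) :=
  stmt_4_general m n c₁ c₂
end

section
/- Let ℓ ≥ 0, m ≥ 1 and n ≥ 0 be integers. A pair (c₁,c₂) ∈ ℤ² can be written as a sum of (ℓ+m+1) multiples of (1,0), plus (m+n+1) multiples of (0,1), plus (ℓ+1) multiples of (−1,0), plus (n+1) multiples of (0,−1), plus m multiples of (−1,−1), where every scalar coefficient is a real number in the half-open interval (−1, 0], if and only if |c₁| ≤ ℓ+m, |c₂| ≤ m+n, and |c₁ − c₂| ≤ ℓ+m+n+1. -/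
lemma aux_sum_div_smul (N : ℕ) (hN : 0 < N) (a : ℝ) (v : ℝ × ℝ) :
    ∑ _i : Fin N, (a / N) • v = a • v := by
  rw [Finset.sum_const, Finset.card_univ, Fintype.card_fin, ← Nat.cast_smul_eq_nsmul ℝ, smul_smul]
  congr 1
  field_simp

lemma aux_sum_Ioc (N : ℕ) (hN : 0 < N) (f : Fin N → ℝ) (hf : ∀ i, f i ∈ Set.Ioc (-1:ℝ) 0) :
    (∑ i, f i) ∈ Set.Ioc (-(N:ℝ)) 0 := by
  constructor
  · have : -(N:ℝ) = ∑ _i : Fin N, (-1:ℝ) := by simp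
    rw [this]
    exact Finset.sum_lt_sum_of_nonempty ⟨⟨0, hN⟩, Finset.mem_univ _⟩ fun i _ => (hf i).1
  · exact Finset.sum_nonpos fun i _ => (hf i).2

lemma aux_mem_Ioc_div (N : ℕ) (hN : 0 < N) (a : ℝ) (h1 : -(N:ℝ) < a) (h2 : a ≤ 0) :
    a / N ∈ Set.Ioc (-1:ℝ) 0 := by
  have hN' : (0:ℝ) < N := by exact_mod_cast hN
  constructor
  · rw [lt_div_iff₀ hN']; linarith
  · exact div_nonpos_of_nonpos_of_nonneg h2 hN'.le

/-- Type (II): the strongly critical integer points for the weights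
(1,0)×(ℓ+m+1), (0,1)×(m+n+1), (−1,0)×(ℓ+1), (0,−1)×(n+1), (−1,−1)×m are
exactly the integer points of the conic region. -/
theorem stmt_5 (l m n : ℕ) (hm : 1 ≤ m) (c₁ c₂ : ℤ) :
    (∃ (δ : Fin (l + m + 1) → ℝ) (ε : Fin (m + n + 1) → ℝ)
        (ζ : Fin (l + 1) → ℝ) (θ : Fin (n + 1) → ℝ) (η : Fin m → ℝ),
      (∀ i, δ i ∈ Set.Ioc (-1 : ℝ) 0) ∧ (∀ j, ε j ∈ Set.Ioc (-1 : ℝ) 0) ∧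
      (∀ k, ζ k ∈ Set.Ioc (-1 : ℝ) 0) ∧ (∀ p, θ p ∈ Set.Ioc (-1 : ℝ) 0) ∧
      (∀ q, η q ∈ Set.Ioc (-1 : ℝ) 0) ∧
      ((c₁ : ℝ), (c₂ : ℝ)) =
        (∑ i, δ i • ((1 : ℝ), (0 : ℝ))) + (∑ j, ε j • ((0 : ℝ), (1 : ℝ))) +
        (∑ k, ζ k • ((-1 : ℝ), (0 : ℝ))) + (∑ p, θ p • ((0 : ℝ), (-1 : ℝ))) +
        (∑ q, η q • ((-1 : ℝ), (-1 : ℝ)))) ↔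
    (|c₁| ≤ (l : ℤ) + m ∧ |c₂| ≤ (m : ℤ) + n ∧ |c₁ - c₂| ≤ (l : ℤ) + m + n + 1) := by
  have hmR : (1:ℝ) ≤ m := by exact_mod_cast hm
  constructor
  · rintro ⟨δ, ε, ζ, θ, η, hδ, hε, hζ, hθ, hη, heq⟩
    have h1 := congrArg Prod.fst heq
    have h2 := congrArg Prod.snd heq
    simp only [Prod.fst_add, Prod.snd_add, Prod.fst_sum, Prod.snd_sum, Prod.smul_fst,
      Prod.smul_snd, smul_eq_mul, mul_one, mul_zero, mul_neg_one,
      Finset.sum_const_zero, add_zero, zero_add, Finset.sum_neg_distrib] at h1 h2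
    have Sδ := aux_sum_Ioc (l + m + 1) (by omega) δ hδ
    have Sε := aux_sum_Ioc (m + n + 1) (by omega) ε hε
    have Sζ := aux_sum_Ioc (l + 1) (by omega) ζ hζ
    have Sθ := aux_sum_Ioc (n + 1) (by omega) θ hθ
    have Sη := aux_sum_Ioc m (by omega) η hη
    obtain ⟨Sδ1, Sδ2⟩ := Sδ; obtain ⟨Sε1, Sε2⟩ := Sε; obtain ⟨Sζ1, Sζ2⟩ := Sζ
    obtain ⟨Sθ1, Sθ2⟩ := Sθ; obtain ⟨Sη1, Sη2⟩ := Sη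
    push_cast at Sδ1 Sε1 Sζ1 Sθ1 Sη1
    have b1 : (c₁:ℝ) < (l:ℝ) + m + 1 := by linarith
    have b2 : -((l:ℝ) + m + 1) < (c₁:ℝ) := by linarith
    have b3 : (c₂:ℝ) < (m:ℝ) + n + 1 := by linarith
    have b4 : -((m:ℝ) + n + 1) < (c₂:ℝ) := by linarith
    have b5 : (c₁:ℝ) - c₂ < (l:ℝ) + m + n + 2 := by linarith
    have b6 : -((l:ℝ) + m + n + 2) < (c₁:ℝ) - c₂ := by linarith
    have i1 : c₁ < (l:ℤ) + m + 1 := by exact_mod_cast b1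
    have i2 : -((l:ℤ) + m + 1) < c₁ := by exact_mod_cast b2
    have i3 : c₂ < (m:ℤ) + n + 1 := by exact_mod_cast b3
    have i4 : -((m:ℤ) + n + 1) < c₂ := by exact_mod_cast b4
    have i5 : c₁ - c₂ < (l:ℤ) + m + n + 2 := by exact_mod_cast b5
    have i6 : -((l:ℤ) + m + n + 2) < c₁ - c₂ := by exact_mod_cast b6
    refine ⟨abs_le.2 ⟨by omega, by omega⟩, abs_le.2 ⟨by omega, by omega⟩,
      abs_le.2 ⟨by omega, by omega⟩⟩
  · rintro ⟨h1, h2, h3⟩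
    obtain ⟨h1a, h1b⟩ := abs_le.1 h1
    obtain ⟨h2a, h2b⟩ := abs_le.1 h2
    obtain ⟨h3a, h3b⟩ := abs_le.1 h3
    have r1a : -((l:ℝ) + m) ≤ (c₁:ℝ) := by exact_mod_cast h1a
    have r1b : (c₁:ℝ) ≤ (l:ℝ) + m := by exact_mod_cast h1b
    have r2a : -((m:ℝ) + n) ≤ (c₂:ℝ) := by exact_mod_cast h2a
    have r2b : (c₂:ℝ) ≤ (m:ℝ) + n := by exact_mod_cast h2b
    have r3a : -((l:ℝ) + m + n + 1) ≤ (c₁:ℝ) - c₂ := by exact_mod_cast h3a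
    have r3b : (c₁:ℝ) - c₂ ≤ (l:ℝ) + m + n + 1 := by exact_mod_cast h3b
    set Lo : ℝ := max (-(m:ℝ)) (max (-((l:ℝ)+m+1) - c₁) (-((m:ℝ)+n+1) - c₂)) with hLo
    set Hi : ℝ := min (1/2 : ℝ) (min ((l:ℝ)+1 - c₁) ((n:ℝ)+1 - c₂)) with hHi
    have hLoHi : Lo < Hi := by
      rw [hLo, hHi]
      simp only [max_lt_iff, lt_min_iff]
      and_intros <;> linarith
    have hLo1 : Lo ≤ -1 := by
      rw [hLo]
      simp only [max_le_iff]
      and_intros <;> linarith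
    have hHi1 : Hi ≤ 1/2 := min_le_left _ _
    set E : ℝ := (Lo + Hi) / 2 with hE
    have hELo : Lo < E := by rw [hE]; linarith
    have hEHi : E < Hi := by rw [hE]; linarith
    have hE0 : E ≤ 0 := by rw [hE]; linarith
    have hEm : -(m:ℝ) < E := lt_of_le_of_lt (le_max_left _ _) hELo
    have hEl : -((l:ℝ)+m+1) - c₁ < E :=
      lt_of_le_of_lt (le_trans (le_max_left _ _) (le_max_right _ _)) hELo
    have hEn : -((m:ℝ)+n+1) - c₂ < E :=
      lt_of_le_of_lt (le_trans (le_max_right _ _) (le_max_right _ _)) hELo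
    have hEu1 : E < (l:ℝ)+1 - c₁ :=
      lt_of_lt_of_le hEHi (le_trans (min_le_right _ _) (min_le_left _ _))
    have hEu2 : E < (n:ℝ)+1 - c₂ :=
      lt_of_lt_of_le hEHi (le_trans (min_le_right _ _) (min_le_right _ _))
    set x : ℝ := (c₁:ℝ) + E with hx
    set y : ℝ := (c₂:ℝ) + E with hy
    set A : ℝ := min x 0 with hA
    set B : ℝ := min y 0 with hB
    set C : ℝ := min (-x) 0 with hC
    set D : ℝ := min (-y) 0 with hD
    have hA0 : A ≤ 0 := min_le_right _ _
    have hB0 : B ≤ 0 := min_le_right _ _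
    have hC0 : C ≤ 0 := min_le_right _ _
    have hD0 : D ≤ 0 := min_le_right _ _
    have hA1 : -((l:ℝ)+m+1) < A := lt_min (by rw [hx]; linarith) (by linarith)
    have hB1 : -((m:ℝ)+n+1) < B := lt_min (by rw [hy]; linarith) (by linarith)
    have hC1 : -((l:ℝ)+1) < C := lt_min (by rw [hx]; linarith) (by linarith)
    have hD1 : -((n:ℝ)+1) < D := lt_min (by rw [hy]; linarith) (by linarith)
    have hAC : A - C = x := by
      rcases le_total x 0 with h | h
      · rw [hA, hC, min_eq_left h, min_eq_right (by linarith)]; ring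
      · rw [hA, hC, min_eq_right h, min_eq_left (by linarith)]; ring
    have hBD : B - D = y := by
      rcases le_total y 0 with h | h
      · rw [hB, hD, min_eq_left h, min_eq_right (by linarith)]; ring
      · rw [hB, hD, min_eq_right h, min_eq_left (by linarith)]; ring
    have hN1 : (0:ℕ) < l + m + 1 := by omega
    have hN2 : (0:ℕ) < m + n + 1 := by omega
    have hN3 : (0:ℕ) < l + 1 := by omega
    have hN4 : (0:ℕ) < n + 1 := by omega
    have hN5 : (0:ℕ) < m := by omega
    refine ⟨fun _ => A / ((l + m + 1 : ℕ) : ℝ), fun _ => B / ((m + n + 1 : ℕ) : ℝ),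
      fun _ => C / ((l + 1 : ℕ) : ℝ), fun _ => D / ((n + 1 : ℕ) : ℝ),
      fun _ => E / ((m : ℕ) : ℝ), ?_, ?_, ?_, ?_, ?_, ?_⟩
    · intro i; exact aux_mem_Ioc_div _ hN1 A (by push_cast; linarith) hA0
    · intro j; exact aux_mem_Ioc_div _ hN2 B (by push_cast; linarith) hB0
    · intro k; exact aux_mem_Ioc_div _ hN3 C (by push_cast; linarith) hC0
    · intro p; exact aux_mem_Ioc_div _ hN4 D (by push_cast; linarith) hD0
    · intro q; exact aux_mem_Ioc_div _ hN5 E (by linarith) hE0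
    · rw [aux_sum_div_smul _ hN1, aux_sum_div_smul _ hN2, aux_sum_div_smul _ hN3,
        aux_sum_div_smul _ hN4, aux_sum_div_smul _ hN5]
      have e1 : (c₁:ℝ) = A - C - E := by rw [hAC, hx]; ring
      have e2 : (c₂:ℝ) = B - D - E := by rw [hBD, hy]; ring
      ext
      · simp only [Prod.fst_add, Prod.smul_fst, smul_eq_mul]
        rw [e1]; ring
      · simp only [Prod.snd_add, Prod.smul_snd, smul_eq_mul]
        rw [e2]; ring
end

section
/- Let ℓ ≥ 0, m ≥ 2 and n ≥ 0 be integers. A pair (c₁,c₂) ∈ ℤ² can be written as a sum of (ℓ+m+n+2) multiples of (1,0), plus m multiples of (0,1), plus (ℓ+n+2) multiples of (−1,0), plus m multiples of (−1,−1), where every scalar coefficient is a real number in the half-open interval (−1, 0], if and only if |c₁| ≤ ℓ+m+n+1, |c₂| ≤ m−1, and |c₁ − c₂| ≤ ℓ+m+n+1. -/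
private lemma sum_Ioc_bounds {N : ℕ} (hN : 0 < N) (f : Fin N → ℝ)
    (hf : ∀ i, f i ∈ Set.Ioc (-1 : ℝ) 0) : -(N : ℝ) < ∑ i, f i ∧ ∑ i, f i ≤ 0 := by
  constructor
  · have : ∑ _i : Fin N, (-1 : ℝ) < ∑ i, f i := by
      apply Finset.sum_lt_sum_of_nonempty
      · simpa [Finset.univ_nonempty_iff] using Fin.pos_iff_nonempty.mp hN
      · exact fun i _ => (hf i).1
    simpa [Finset.sum_const, nsmul_eq_mul] using this
  · exact Finset.sum_nonpos fun i _ => (hf i).2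

private lemma pair_eq (N₁ N₂ N₃ N₄ : ℕ) (δ : Fin N₁ → ℝ) (ε : Fin N₂ → ℝ)
    (ζ : Fin N₃ → ℝ) (η : Fin N₄ → ℝ) :
    (∑ i, δ i • ((1 : ℝ), (0 : ℝ))) + (∑ j, ε j • ((0 : ℝ), (1 : ℝ))) +
        (∑ k, ζ k • ((-1 : ℝ), (0 : ℝ))) + (∑ q, η q • ((-1 : ℝ), (-1 : ℝ)))
      = ((∑ i, δ i) - (∑ k, ζ k) - (∑ q, η q), (∑ j, ε j) - (∑ q, η q)) := by
  rw [← Finset.sum_smul, ← Finset.sum_smul, ← Finset.sum_smul, ← Finset.sum_smul]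
  simp [Prod.ext_iff, smul_eq_mul]
  constructor <;> ring

private lemma sum_const_div {N : ℕ} (hN : (0:ℝ) < N) (a : ℝ) :
    ∑ _i : Fin N, a / (N : ℝ) = a := by
  rw [Finset.sum_const, Finset.card_univ, Fintype.card_fin, nsmul_eq_mul,
    mul_div_cancel₀ _ hN.ne']

/-- Type (III): the strongly critical integer points for the weights
(1,0)×(ℓ+m+n+2), (0,1)×m, (−1,0)×(ℓ+n+2), (−1,−1)×m are exactly the integer
points of the conic region. -/
theorem stmt_6 (l m n : ℕ) (hm : 2 ≤ m) (c₁ c₂ : ℤ) :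
    (∃ (δ : Fin (l + m + n + 2) → ℝ) (ε : Fin m → ℝ)
        (ζ : Fin (l + n + 2) → ℝ) (η : Fin m → ℝ),
      (∀ i, δ i ∈ Set.Ioc (-1 : ℝ) 0) ∧ (∀ j, ε j ∈ Set.Ioc (-1 : ℝ) 0) ∧
      (∀ k, ζ k ∈ Set.Ioc (-1 : ℝ) 0) ∧ (∀ q, η q ∈ Set.Ioc (-1 : ℝ) 0) ∧
      ((c₁ : ℝ), (c₂ : ℝ)) =
        (∑ i, δ i • ((1 : ℝ), (0 : ℝ))) + (∑ j, ε j • ((0 : ℝ), (1 : ℝ))) +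
        (∑ k, ζ k • ((-1 : ℝ), (0 : ℝ))) + (∑ q, η q • ((-1 : ℝ), (-1 : ℝ)))) ↔
    (|c₁| ≤ (l : ℤ) + m + n + 1 ∧ |c₂| ≤ (m : ℤ) - 1 ∧
      |c₁ - c₂| ≤ (l : ℤ) + m + n + 1) := by
  have hm0 : 0 < m := by omega
  constructor
  · rintro ⟨δ, ε, ζ, η, hδ, hε, hζ, hη, heq⟩
    rw [pair_eq, Prod.ext_iff] at heq
    obtain ⟨h1, h2⟩ := heq
    obtain ⟨hA1, hA2⟩ := sum_Ioc_bounds (by omega) δ hδ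
    obtain ⟨hB1, hB2⟩ := sum_Ioc_bounds hm0 ε hε
    obtain ⟨hC1, hC2⟩ := sum_Ioc_bounds (by omega) ζ hζ
    obtain ⟨hD1, hD2⟩ := sum_Ioc_bounds hm0 η hη
    simp only at h1 h2
    push_cast at hA1 hC1 hD1 hB1
    have i1 : ((c₁ : ℤ) : ℝ) < ((l : ℤ) + m + n + 2 : ℤ) := by push_cast; linarith
    have i2 : (((-(l : ℤ) - m - n - 2) : ℤ) : ℝ) < c₁ := by push_cast; linarith
    have i3 : ((c₂ : ℤ) : ℝ) < ((m : ℤ) : ℤ) := by push_cast; linarith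
    have i4 : (((-(m : ℤ)) : ℤ) : ℝ) < c₂ := by push_cast; linarith
    have i5 : ((c₁ - c₂ : ℤ) : ℝ) < ((l : ℤ) + m + n + 2 : ℤ) := by push_cast; linarith
    have i6 : (((-(l : ℤ) - m - n - 2) : ℤ) : ℝ) < (c₁ - c₂ : ℤ) := by push_cast; linarith
    have j1 := Int.cast_lt.mp i1
    have j2 := Int.cast_lt.mp i2
    have j3 := Int.cast_lt.mp i3
    have j4 := Int.cast_lt.mp i4
    have j5 := Int.cast_lt.mp i5
    have j6 := Int.cast_lt.mp i6
    refine ⟨?_, ?_, ?_⟩ <;> rw [abs_le] <;> omega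
  · rintro ⟨h1, h2, h3⟩
    obtain ⟨h1a, h1b⟩ := abs_le.mp h1
    obtain ⟨h2a, h2b⟩ := abs_le.mp h2
    obtain ⟨h3a, h3b⟩ := abs_le.mp h3
    have R : ∀ a b : ℤ, a ≤ b → (a:ℝ) ≤ (b:ℝ) := fun a b h => Int.cast_le.mpr h
    have r1a := R _ _ h1a; have r1b := R _ _ h1b
    have r2a := R _ _ h2a; have r2b := R _ _ h2b
    have r3a := R _ _ h3a; have r3b := R _ _ h3b
    push_cast at r1a r1b r2a r2b r3a r3b
    set x : ℝ := (c₁ : ℝ) with hx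
    set y : ℝ := (c₂ : ℝ) with hy
    set L : ℝ := max (-(m:ℝ)) (max (-(m:ℝ) - y) (-((l:ℝ)+m+n+2) - x)) with hL
    set U : ℝ := min 0 (min (-y) ((l:ℝ)+n+2 - x)) with hU
    have hLU : L < U := by
      rw [hL, hU]
      simp only [max_lt_iff, lt_min_iff]
      and_intros <;>
        linarith [Nat.cast_nonneg (α:=ℝ) l, Nat.cast_nonneg (α:=ℝ) n,
          (by exact_mod_cast hm : (2:ℝ) ≤ m)]
    set D : ℝ := (L + U) / 2 with hD
    have hDL : L < D := by rw [hD]; linarith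
    have hDU : D < U := by rw [hD]; linarith
    have hD1 : -(m:ℝ) < D := lt_of_le_of_lt (le_max_left _ _) hDL
    have hD2 : D ≤ 0 := le_of_lt (lt_of_lt_of_le hDU (min_le_left _ _))
    have hB1 : -(m:ℝ) - y < D :=
      lt_of_le_of_lt (le_trans (le_max_left _ _) (le_max_right _ _)) hDL
    have hB2 : D ≤ -y :=
      le_of_lt (lt_of_lt_of_le hDU (le_trans (min_le_right _ _) (min_le_left _ _)))
    have hA1 : -((l:ℝ)+m+n+2) - x < D :=
      lt_of_le_of_lt (le_trans (le_max_right _ _) (le_max_right _ _)) hDL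
    have hA2 : D < (l:ℝ)+n+2 - x :=
      lt_of_lt_of_le hDU (le_trans (min_le_right _ _) (min_le_right _ _))
    set B : ℝ := y + D with hBdef
    set t : ℝ := x + D with ht
    obtain ⟨A, C, hA, hC, hAC⟩ : ∃ A C : ℝ, (-((l:ℝ)+m+n+2) < A ∧ A ≤ 0) ∧
        (-((l:ℝ)+n+2) < C ∧ C ≤ 0) ∧ A - C = t := by
      rcases le_or_gt t 0 with h | h
      · exact ⟨t, 0, ⟨by rw [ht]; linarith, h⟩,
          ⟨by linarith [Nat.cast_nonneg (α:=ℝ) l, Nat.cast_nonneg (α:=ℝ) n], le_refl 0⟩,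
          by ring⟩
      · exact ⟨0, -t, ⟨by linarith [Nat.cast_nonneg (α:=ℝ) l, Nat.cast_nonneg (α:=ℝ) n,
            (by exact_mod_cast hm0 : (0:ℝ) < m)], le_refl 0⟩,
          ⟨by rw [ht]; linarith, by linarith⟩, by ring⟩
    have hN1 : (0:ℝ) < ((l+m+n+2 : ℕ) : ℝ) := by positivity
    have hN3 : (0:ℝ) < ((l+n+2 : ℕ) : ℝ) := by positivity
    have hNm : (0:ℝ) < ((m : ℕ) : ℝ) := by exact_mod_cast hm0
    refine ⟨fun _ => A / ((l+m+n+2 : ℕ) : ℝ), fun _ => B / ((m : ℕ) : ℝ),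
      fun _ => C / ((l+n+2 : ℕ) : ℝ), fun _ => D / ((m : ℕ) : ℝ), ?_, ?_, ?_, ?_, ?_⟩
    · intro i
      constructor
      · rw [lt_div_iff₀ hN1]; push_cast; linarith [hA.1]
      · exact div_nonpos_of_nonpos_of_nonneg hA.2 hN1.le
    · intro j
      constructor
      · rw [lt_div_iff₀ hNm]; push_cast; linarith [hB1]
      · exact div_nonpos_of_nonpos_of_nonneg (by rw [hBdef]; linarith [hB2]) hNm.le
    · intro k
      constructor
      · rw [lt_div_iff₀ hN3]; push_cast; linarith [hC.1]
      · exact div_nonpos_of_nonpos_of_nonneg hC.2 hN3.le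
    · intro q
      constructor
      · rw [lt_div_iff₀ hNm]; push_cast; linarith [hD1]
      · exact div_nonpos_of_nonpos_of_nonneg hD2 hNm.le
    · rw [pair_eq, sum_const_div hN1, sum_const_div hNm, sum_const_div hN3,
        sum_const_div hNm, Prod.ext_iff]
      constructor
      · simp only; linarith [hAC]
      · simp only; rw [hBdef]; ring
end

section
/- Let n ≥ 0 be an integer. A pair (c₁,c₂) ∈ ℤ² can be written as a sum of (n+2) multiples of (1,0), plus (n+2) multiples of (0,1), plus (n+2) multiples of (−1,−1), where every scalar coefficient is a real number in the half-open interval (−1, 0], if and only if |c₁| ≤ n+1, |c₂| ≤ n+1, and |c₁ − c₂| ≤ n+1. -/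
/-- Type (V): the strongly critical integer points for the weights
(1,0), (0,1), (−1,−1), each with multiplicity n+2, are exactly the integer
points of the hexagon |c₁| ≤ n+1, |c₂| ≤ n+1, |c₁ − c₂| ≤ n+1. -/
theorem stmt_8 (n : ℕ) (c₁ c₂ : ℤ) :
    (∃ (δ : Fin (n + 2) → ℝ) (ε : Fin (n + 2) → ℝ) (η : Fin (n + 2) → ℝ),
      (∀ i, δ i ∈ Set.Ioc (-1 : ℝ) 0) ∧ (∀ j, ε j ∈ Set.Ioc (-1 : ℝ) 0) ∧
      (∀ q, η q ∈ Set.Ioc (-1 : ℝ) 0) ∧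
      ((c₁ : ℝ), (c₂ : ℝ)) =
        (∑ i, δ i • ((1 : ℝ), (0 : ℝ))) + (∑ j, ε j • ((0 : ℝ), (1 : ℝ))) +
        (∑ q, η q • ((-1 : ℝ), (-1 : ℝ)))) ↔
    (|c₁| ≤ (n : ℤ) + 1 ∧ |c₂| ≤ (n : ℤ) + 1 ∧ |c₁ - c₂| ≤ (n : ℤ) + 1) := by
  have hNpos : (0 : ℝ) < (n : ℝ) + 2 := by positivity
  constructor
  · rintro ⟨δ, ε, η, hδ, hε, hη, heq⟩
    have hsum : ∀ (f : Fin (n + 2) → ℝ), (∀ i, f i ∈ Set.Ioc (-1 : ℝ) 0) →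
        -((n : ℝ) + 2) < ∑ i, f i ∧ ∑ i, f i ≤ 0 := by
      intro f hf
      constructor
      · have : ∑ _i : Fin (n + 2), (-1 : ℝ) < ∑ i, f i := by
          apply Finset.sum_lt_sum_of_nonempty
          · exact Finset.univ_nonempty
          · intro i _; exact (hf i).1
        simpa [Finset.sum_const, Finset.card_fin, nsmul_eq_mul] using this
      · exact Finset.sum_nonpos fun i _ => (hf i).2
    obtain ⟨hD1, hD2⟩ := hsum δ hδ
    obtain ⟨hE1, hE2⟩ := hsum ε hε
    obtain ⟨hH1, hH2⟩ := hsum η hη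
    have h1 : (c₁ : ℝ) = (∑ i, δ i) - (∑ q, η q) := by
      have := congrArg Prod.fst heq
      simpa [Prod.fst_sum, smul_eq_mul, Finset.sum_neg_distrib, sub_eq_add_neg]
        using this
    have h2 : (c₂ : ℝ) = (∑ j, ε j) - (∑ q, η q) := by
      have := congrArg Prod.snd heq
      simpa [Prod.snd_sum, smul_eq_mul, Finset.sum_neg_distrib, sub_eq_add_neg]
        using this
    have key : ∀ d : ℤ, -((n : ℝ) + 2) < (d : ℝ) → (d : ℝ) < (n : ℝ) + 2 →
        |d| ≤ (n : ℤ) + 1 := by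
      intro d hd1 hd2
      have hb1 : -((n : ℤ) + 2) < d := by exact_mod_cast (by push_cast; linarith : (-((n:ℝ)+2) : ℝ) < (d:ℝ))
      have hb2 : d < (n : ℤ) + 2 := by exact_mod_cast hd2
      rw [abs_le]; omega
    refine ⟨key c₁ (by rw [h1]; linarith) (by rw [h1]; linarith),
            key c₂ (by rw [h2]; linarith) (by rw [h2]; linarith),
            key (c₁ - c₂) (by push_cast; rw [h1, h2]; linarith)
              (by push_cast; rw [h1, h2]; linarith)⟩
  · rintro ⟨h1, h2, h3⟩
    have h1' : |(c₁ : ℝ)| ≤ (n : ℝ) + 1 := by exact_mod_cast (by push_cast at h1 ⊢; exact_mod_cast h1 : (|c₁| : ℝ) ≤ (n : ℝ) + 1)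
    have h1a : -((n : ℝ) + 1) ≤ (c₁ : ℝ) := neg_le_of_abs_le h1'
    have h1b : (c₁ : ℝ) ≤ (n : ℝ) + 1 := le_of_abs_le h1'
    have h2' : |(c₂ : ℝ)| ≤ (n : ℝ) + 1 := by exact_mod_cast (by push_cast at h2 ⊢; exact_mod_cast h2 : (|c₂| : ℝ) ≤ (n : ℝ) + 1)
    have h2a : -((n : ℝ) + 1) ≤ (c₂ : ℝ) := neg_le_of_abs_le h2'
    have h2b : (c₂ : ℝ) ≤ (n : ℝ) + 1 := le_of_abs_le h2'
    have h3i : -((n : ℤ) + 1) ≤ c₁ - c₂ ∧ c₁ - c₂ ≤ (n : ℤ) + 1 := abs_le.mp h3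
    have h3a : -((n : ℝ) + 1) ≤ (c₁ : ℝ) - (c₂ : ℝ) := by exact_mod_cast (by push_cast; exact_mod_cast h3i.1 : (-((n:ℝ)+1) : ℝ) ≤ ((c₁ - c₂ : ℤ) : ℝ))
    have h3b : (c₁ : ℝ) - (c₂ : ℝ) ≤ (n : ℝ) + 1 := by exact_mod_cast h3i.2
    set M : ℝ := max (c₁ : ℝ) (max (c₂ : ℝ) 0) with hM
    have hMc₁ : (c₁ : ℝ) ≤ M := le_max_left _ _
    have hMc₂ : (c₂ : ℝ) ≤ M := le_trans (le_max_left _ _) (le_max_right _ _)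
    have hM0 : (0 : ℝ) ≤ M := le_trans (le_max_right _ _) (le_max_right _ _)
    have hMn : M ≤ (n : ℝ) + 1 := by
      apply max_le h1b (max_le h2b (by linarith))
    have hMc₁' : M - (c₁ : ℝ) ≤ (n : ℝ) + 1 := by
      rcases max_cases (c₁ : ℝ) (max (c₂ : ℝ) 0) with ⟨he, _⟩ | ⟨he, _⟩
      · rw [hM, he]; linarith
      · rw [hM, he]
        rcases max_cases (c₂ : ℝ) 0 with ⟨he2, _⟩ | ⟨he2, _⟩ <;> rw [he2] <;> linarith
    have hMc₂' : M - (c₂ : ℝ) ≤ (n : ℝ) + 1 := by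
      rcases max_cases (c₁ : ℝ) (max (c₂ : ℝ) 0) with ⟨he, _⟩ | ⟨he, _⟩
      · rw [hM, he]; linarith
      · rw [hM, he]
        rcases max_cases (c₂ : ℝ) 0 with ⟨he2, _⟩ | ⟨he2, _⟩ <;> rw [he2] <;> linarith
    set a : ℝ := (c₁ : ℝ) - M - 1/2 with ha
    set b : ℝ := (c₂ : ℝ) - M - 1/2 with hb
    set c : ℝ := -M - 1/2 with hc
    have haI : -((n : ℝ) + 2) < a ∧ a ≤ 0 := ⟨by rw [ha]; linarith, by rw [ha]; linarith⟩
    have hbI : -((n : ℝ) + 2) < b ∧ b ≤ 0 := ⟨by rw [hb]; linarith, by rw [hb]; linarith⟩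
    have hcI : -((n : ℝ) + 2) < c ∧ c ≤ 0 := ⟨by rw [hc]; linarith, by rw [hc]; linarith⟩
    have hmem : ∀ x : ℝ, -((n : ℝ) + 2) < x → x ≤ 0 →
        x / ((n : ℝ) + 2) ∈ Set.Ioc (-1 : ℝ) 0 := by
      intro x hx1 hx2
      constructor
      · rw [lt_div_iff₀ hNpos]; linarith
      · exact div_nonpos_of_nonpos_of_nonneg hx2 hNpos.le
    have hsumconst : ∀ x : ℝ, ∑ _i : Fin (n + 2), x / ((n : ℝ) + 2) = x := by
      intro x
      rw [Finset.sum_const, Finset.card_fin, nsmul_eq_mul]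
      push_cast
      field_simp
    refine ⟨fun _ => a / ((n : ℝ) + 2), fun _ => b / ((n : ℝ) + 2),
        fun _ => c / ((n : ℝ) + 2),
        fun _ => hmem a haI.1 haI.2, fun _ => hmem b hbI.1 hbI.2,
        fun _ => hmem c hcI.1 hcI.2, ?_⟩
    have k1 := hsumconst a
    have k2 := hsumconst b
    have k3 := hsumconst c
    refine Prod.ext ?_ ?_ <;>
      simp only [Prod.fst_add, Prod.snd_add, Prod.fst_sum, Prod.snd_sum,
        Prod.smul_mk, smul_eq_mul, mul_one, mul_zero, mul_neg_one,
        Finset.sum_neg_distrib, Finset.sum_const_zero, add_zero, zero_add,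
        k1, k2, k3] <;> [rw [ha, hc]; rw [hb, hc]] <;> ring
end

section
/- Let m ≥ 0 and n ≥ 1 be integers. Consider the four weight types A = (1,0), B = (0,1), C = (−1,0), D = (−1,−1) in ℤ² with multiplicities μ(A) = m+n+2, μ(B) = n+1, μ(C) = m+1, μ(D) = n+1. For a subset T of {A,B,C,D}, say that (c₁,c₂) ∈ ℤ² admits a T-representation if there exist integers a, b, e, f such that (c₁,c₂) = a·(1,0) + b·(0,1) + e·(−1,0) + f·(−1,−1), where the coefficient of each weight type in T is ≥ 0 and the coefficient of each weight type not in T is ≤ −μ(that type). Then (c₁,c₂) admits a T-representation for at least one T among {D}, {A,D}, {A}, {A,B}, {B}, {B,C,D} if and only if it is NOT the case that |c₂| ≤ n and −(m+n+1) + min(c₂,0) ≤ c₁ ≤ (m+n+1) + max(c₂,0). -/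
/-- `(c₁,c₂)` admits a `T`-representation in the weight types
A = (1,0), B = (0,1), C = (−1,0), D = (−1,−1) (indexed by 0,1,2,3) with
multiplicities m+n+2, n+1, m+1, n+1: there is one integer coefficient per
weight type, the coefficient of each type in `T` is ≥ 0 and the coefficient
of each type not in `T` is ≤ −(its multiplicity). -/
def TRep12 (m n : ℕ) (T : Finset (Fin 4)) (c₁ c₂ : ℤ) : Prop :=
  ∃ a b e f : ℤ,
    (c₁, c₂) = a • ((1 : ℤ), (0 : ℤ)) + b • ((0 : ℤ), (1 : ℤ)) +
      e • ((-1 : ℤ), (0 : ℤ)) + f • ((-1 : ℤ), (-1 : ℤ)) ∧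
    (if (0 : Fin 4) ∈ T then 0 ≤ a else a ≤ -((m : ℤ) + n + 2)) ∧
    (if (1 : Fin 4) ∈ T then 0 ≤ b else b ≤ -((n : ℤ) + 1)) ∧
    (if (2 : Fin 4) ∈ T then 0 ≤ e else e ≤ -((m : ℤ) + 1)) ∧
    (if (3 : Fin 4) ∈ T then 0 ≤ f else f ≤ -((n : ℤ) + 1))

lemma trep12_iff (m n : ℕ) (T : Finset (Fin 4)) (c₁ c₂ : ℤ) :
    TRep12 m n T c₁ c₂ ↔ ∃ a b e f : ℤ,
      (c₁ = a - e - f ∧ c₂ = b - f) ∧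
      (if (0 : Fin 4) ∈ T then 0 ≤ a else a ≤ -((m : ℤ) + n + 2)) ∧
      (if (1 : Fin 4) ∈ T then 0 ≤ b else b ≤ -((n : ℤ) + 1)) ∧
      (if (2 : Fin 4) ∈ T then 0 ≤ e else e ≤ -((m : ℤ) + 1)) ∧
      (if (3 : Fin 4) ∈ T then 0 ≤ f else f ≤ -((n : ℤ) + 1)) := by
  unfold TRep12
  refine exists₄_congr fun a b e f => and_congr_left fun _ => ?_
  simp only [Prod.smul_mk, smul_eq_mul, Prod.mk_add_mk, Prod.mk.injEq]
  constructor <;> rintro ⟨h1, h2⟩ <;> constructor <;> linarith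

/-- Type (I) non-MCM region: `(c₁,c₂)` admits a `T`-representation for one of
the subsets {D}, {A,D}, {A}, {A,B}, {B}, {B,C,D} iff `(c₁,c₂)` lies outside the
MCM region of Figure 8. -/
theorem stmt_12 (m n : ℕ) (hn : 1 ≤ n) (c₁ c₂ : ℤ) :
    (TRep12 m n {3} c₁ c₂ ∨ TRep12 m n {0, 3} c₁ c₂ ∨ TRep12 m n {0} c₁ c₂ ∨
      TRep12 m n {0, 1} c₁ c₂ ∨ TRep12 m n {1} c₁ c₂ ∨
      TRep12 m n {1, 2, 3} c₁ c₂) ↔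
    ¬(|c₂| ≤ (n : ℤ) ∧ -((m : ℤ) + n + 1) + min c₂ 0 ≤ c₁ ∧
      c₁ ≤ ((m : ℤ) + n + 1) + max c₂ 0) := by
  simp only [trep12_iff] at *
  constructor
  · rintro (h | h | h | h | h | h) <;>
    · obtain ⟨a, b, e, f, ⟨h1, h2⟩, h3, h4, h5, h6⟩ := h
      simp (config := { decide := true }) only [Finset.mem_insert,
        Finset.mem_singleton, if_true, if_false] at h3 h4 h5 h6
      rintro ⟨hb, hl, hr⟩
      rw [abs_le] at hb
      rcases le_total c₂ 0 with hc | hc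
      · rw [min_eq_left hc] at hl; rw [max_eq_right hc] at hr; omega
      · rw [min_eq_right hc] at hl; rw [max_eq_left hc] at hr; omega
  · intro h
    by_cases h1 : c₂ ≤ -(n : ℤ) - 1
    · -- T = {3}
      obtain ⟨A, hA1, hA2⟩ : ∃ A : ℤ, A ≤ -((m : ℤ) + n + 2) ∧
          A ≤ (c₁ + (-(n + 1) - c₂)) - (m + 1) :=
        ⟨min _ _, min_le_left _ _, min_le_right _ _⟩
      refine Or.inl ⟨A, -((n : ℤ) + 1), A - (c₁ + (-(n + 1) - c₂)),
        -((n : ℤ) + 1) - c₂, ⟨by ring, by ring⟩, ?_, ?_, ?_, ?_⟩ <;>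
        simp (config := { decide := true }) only [Finset.mem_insert,
          Finset.mem_singleton, if_true, if_false] <;> omega
    by_cases h2 : (n : ℤ) + 1 ≤ c₂
    · -- T = {1}
      obtain ⟨A, hA1, hA2⟩ : ∃ A : ℤ, A ≤ -((m : ℤ) + n + 2) ∧
          A ≤ (c₁ + -c₂) - (m + 1) :=
        ⟨min _ _, min_le_left _ _, min_le_right _ _⟩
      refine Or.inr (Or.inr (Or.inr (Or.inr (Or.inl
        ⟨A, 0, A - (c₁ + -c₂), -c₂, ⟨by ring, by ring⟩,
          ?_, ?_, ?_, ?_⟩)))) <;>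
        simp (config := { decide := true }) only [Finset.mem_insert,
          Finset.mem_singleton, if_true, if_false] <;> omega
    obtain ⟨M, hM1, hM2, hMeq⟩ : ∃ M : ℤ, c₂ ≤ M ∧ 0 ≤ M ∧ max c₂ 0 = M :=
      ⟨max c₂ 0, le_max_left _ _, le_max_right _ _, rfl⟩
    obtain ⟨K, hK1, hK2, hKeq⟩ : ∃ K : ℤ, K ≤ c₂ ∧ K ≤ 0 ∧ min c₂ 0 = K :=
      ⟨min c₂ 0, min_le_left _ _, min_le_right _ _, rfl⟩
    have hMK : M = c₂ ∨ M = 0 := by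
      rcases max_choice c₂ 0 with hc | hc <;> [left; right] <;> omega
    have hKK : K = c₂ ∨ K = 0 := by
      rcases min_choice c₂ 0 with hc | hc <;> [left; right] <;> omega
    rw [hMeq, hKeq] at h
    by_cases h3 : (m : ℤ) + n + 2 + M ≤ c₁
    · -- T = {0}
      refine Or.inr (Or.inr (Or.inl
        ⟨c₁ - (m + 1) - ((n : ℤ) + 1) - M, c₂ + (-((n : ℤ) + 1) - M), -((m : ℤ) + 1),
        -((n : ℤ) + 1) - M, ⟨by ring, by ring⟩, ?_, ?_, ?_, ?_⟩)) <;>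
        simp (config := { decide := true }) only [Finset.mem_insert,
          Finset.mem_singleton, if_true, if_false] <;> omega
    by_cases h4 : c₁ ≤ -((m : ℤ) + n + 2) + K
    · -- T = {1,2,3}
      refine Or.inr (Or.inr (Or.inr (Or.inr (Or.inr
        ⟨c₁ + -K, c₂ - K, 0, -K, ⟨by ring, by ring⟩, ?_, ?_, ?_, ?_⟩)))) <;>
        simp (config := { decide := true }) only [Finset.mem_insert,
          Finset.mem_singleton, if_true, if_false] <;> omega
    exfalso
    exact h ⟨abs_le.mpr ⟨by omega, by omega⟩, by omega, by omega⟩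
end

section
/- Let ℓ ≥ 0, m ≥ 1 and n ≥ 0 be integers. Consider the five weight types A = (1,0), B = (0,1), C = (−1,0), E = (0,−1), D = (−1,−1) in ℤ² with multiplicities μ(A) = ℓ+m+1, μ(B) = m+n+1, μ(C) = ℓ+1, μ(E) = n+1, μ(D) = m. For a subset T of {A,B,C,E,D}, say that (c₁,c₂) ∈ ℤ² admits a T-representation if there exist integers a, b, e, g, f such that (c₁,c₂) = a·(1,0) + b·(0,1) + e·(−1,0) + g·(0,−1) + f·(−1,−1), where the coefficient of each weight type in T is ≥ 0 and the coefficient of each weight type not in T is ≤ −μ(that type). Then (c₁,c₂) admits a T-representation for at least one T among {C,E,D}, {E,D}, {A,E,D}, {A}, {A,B}, {B}, {B,C,D}, {C,D} if and only if it is NOT the case that |c₁| ≤ ℓ+m and |c₂| ≤ m+n. -/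
/-- `(c₁,c₂)` admits a `T`-representation in the weight types
A = (1,0), B = (0,1), C = (−1,0), E = (0,−1), D = (−1,−1) (indexed by
0,1,2,3,4) with multiplicities ℓ+m+1, m+n+1, ℓ+1, n+1, m. -/
def TRep13 (l m n : ℕ) (T : Finset (Fin 5)) (c₁ c₂ : ℤ) : Prop :=
  ∃ a b e g f : ℤ,
    (c₁, c₂) = a • ((1 : ℤ), (0 : ℤ)) + b • ((0 : ℤ), (1 : ℤ)) +
      e • ((-1 : ℤ), (0 : ℤ)) + g • ((0 : ℤ), (-1 : ℤ)) +
      f • ((-1 : ℤ), (-1 : ℤ)) ∧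
    (if (0 : Fin 5) ∈ T then 0 ≤ a else a ≤ -((l : ℤ) + m + 1)) ∧
    (if (1 : Fin 5) ∈ T then 0 ≤ b else b ≤ -((m : ℤ) + n + 1)) ∧
    (if (2 : Fin 5) ∈ T then 0 ≤ e else e ≤ -((l : ℤ) + 1)) ∧
    (if (3 : Fin 5) ∈ T then 0 ≤ g else g ≤ -((n : ℤ) + 1)) ∧
    (if (4 : Fin 5) ∈ T then 0 ≤ f else f ≤ -(m : ℤ))

/-- Type (II) non-MCM region: `(c₁,c₂)` admits a `T`-representation for one of
the subsets {C,E,D}, {E,D}, {A,E,D}, {A}, {A,B}, {B}, {B,C,D}, {C,D} iff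
`(c₁,c₂)` lies outside the rectangle |c₁| ≤ ℓ+m, |c₂| ≤ m+n. -/
theorem stmt_13 (l m n : ℕ) (hm : 1 ≤ m) (c₁ c₂ : ℤ) :
    (TRep13 l m n {2, 3, 4} c₁ c₂ ∨ TRep13 l m n {3, 4} c₁ c₂ ∨
      TRep13 l m n {0, 3, 4} c₁ c₂ ∨ TRep13 l m n {0} c₁ c₂ ∨
      TRep13 l m n {0, 1} c₁ c₂ ∨ TRep13 l m n {1} c₁ c₂ ∨
      TRep13 l m n {1, 2, 4} c₁ c₂ ∨ TRep13 l m n {2, 4} c₁ c₂) ↔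
    ¬(|c₁| ≤ (l : ℤ) + m ∧ |c₂| ≤ (m : ℤ) + n) := by
  constructor
  · rintro (h|h|h|h|h|h|h|h) <;>
    · obtain ⟨a,b,e,g,f,heq,h0,h1,h2,h3,h4⟩ := h
      rw [Prod.ext_iff] at heq
      simp only [Prod.fst_add, Prod.snd_add, Prod.smul_mk, smul_eq_mul] at heq
      simp (config := { decide := true }) only [if_true, if_false] at h0 h1 h2 h3 h4
      rw [abs_le, abs_le]
      omega
  · intro h
    rw [abs_le, abs_le] at h
    rcases (by omega :
        (l : ℤ) + m < c₁ ∨ c₁ < -((l : ℤ) + m) ∨ (m : ℤ) + n < c₂ ∨ c₂ < -((m : ℤ) + n))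
      with hc|hc|hc|hc
    · -- c₁ ≥ l+m+1 : use T = {0}
      have : TRep13 l m n {0} c₁ c₂ := by
        refine ⟨c₁ - l - 1 - m, min (-((m:ℤ)+n+1)) (c₂ - m - (n+1)),
          -((l:ℤ)+1), min (-((m:ℤ)+n+1)) (c₂ - m - (n+1)) - c₂ + m, -(m:ℤ),
          ?_, ?_, ?_, ?_, ?_, ?_⟩
        · rw [Prod.ext_iff]
          simp only [Prod.fst_add, Prod.snd_add, Prod.smul_mk, smul_eq_mul]
          constructor <;> ring_nf <;> omega
        all_goals
          simp (config := { decide := true }) only [if_true, if_false]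
          try omega
      tauto
    · -- c₁ ≤ -(l+m+1) : use T = {2,4}
      have : TRep13 l m n {2, 4} c₁ c₂ := by
        refine ⟨-((l:ℤ)+m+1), min (-((m:ℤ)+n+1)) (c₂ - (n+1)),
          -((l:ℤ)+m+1) - c₁, min (-((m:ℤ)+n+1)) (c₂ - (n+1)) - c₂, 0,
          ?_, ?_, ?_, ?_, ?_, ?_⟩
        · rw [Prod.ext_iff]
          simp only [Prod.fst_add, Prod.snd_add, Prod.smul_mk, smul_eq_mul]
          constructor <;> ring_nf <;> omega
        all_goals
          simp (config := { decide := true }) only [if_true, if_false]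
          try omega
      tauto
    · -- c₂ ≥ m+n+1 : use T = {1}
      have : TRep13 l m n {1} c₁ c₂ := by
        refine ⟨min (-((l:ℤ)+m+1)) (c₁ - m - (l+1)), c₂ - (n+1) - m,
          min (-((l:ℤ)+m+1)) (c₁ - m - (l+1)) + m - c₁, -((n:ℤ)+1), -(m:ℤ),
          ?_, ?_, ?_, ?_, ?_, ?_⟩
        · rw [Prod.ext_iff]
          simp only [Prod.fst_add, Prod.snd_add, Prod.smul_mk, smul_eq_mul]
          constructor <;> ring_nf <;> omega
        all_goals
          simp (config := { decide := true }) only [if_true, if_false]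
          try omega
      tauto
    · -- c₂ ≤ -(m+n+1) : use T = {3,4}
      have : TRep13 l m n {3, 4} c₁ c₂ := by
        refine ⟨min (-((l:ℤ)+m+1)) (c₁ - (l+1)), -((m:ℤ)+n+1),
          min (-((l:ℤ)+m+1)) (c₁ - (l+1)) - c₁, -((m:ℤ)+n+1) - c₂, 0,
          ?_, ?_, ?_, ?_, ?_, ?_⟩
        · rw [Prod.ext_iff]
          simp only [Prod.fst_add, Prod.snd_add, Prod.smul_mk, smul_eq_mul]
          constructor <;> ring_nf <;> omega
        all_goals
          simp (config := { decide := true }) only [if_true, if_false]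
          try omega
      tauto
end
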